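/- arXiv:2106.13667 — 2 statements merged into one kernel-verified Lean document; each statement's English description precedes it below -/
import Mathlib

section
/- Let $\mathcal{I} = \{0, 1, \dots, n\}$ index $n+1$ agents, each with probability densities $p_i^{(k)}, p_i^{(k+1)}$ on a finite set $\mathcal{F}$, and let $\psi : \mathcal{F} \times \mathcal{F} \to \mathbb{R}_{\ge 0}$ be symmetric ($\psi(f,g) = \psi(g,f)$). Define the expected collision penalty $c(p, q) = \sum_{f,g} \psi(f,g) p(f) q(g)$ and the joint penalty $J_c(p_0,\dots,p_n) = \sum_{i < j} c(p_i, p_j)$. Suppose for each $i$, $\bar{c}_i(p_i^{(k+1)}) \le \bar{c}_i(p_i^{(k)}) - D_{KL}(p_i^{(k+1)} \Vert p_i^{(k)})$, where $\bar{c}_i(p) = \sum_{j < i} c(p, p_j^{(k+1)}) + \sum_{j > i} c(p, p_j^{(k)})$. Then $J_c(p_0^{(k+1)}, \dots, p_n^{(k+1)}) \le J_c(p_0^{(k)}, \dots, p_n^{(k)}) - \sum_i D_{KL}(p_i^{(k+1)} \Vert p_i^{(k)})$. -/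
/-! Sum the per-agent inequalities over `i`. By symmetry of `ψ`, the new-new terms `j < i` add up
to `Jc ψ pk1`, the old-old terms `i < j` to `Jc ψ pk`, and the mixed terms on the two sides are
the same sum `∑_{i<j} c(pk1 i, pk j)` (counted once from agent `i`, once from agent `j`), so they cancel. -/

open Finset

variable {F : Type*} [Fintype F]

/-- Expected collision penalty between two densities. -/
def cpen (ψ : F → F → ℝ) (p q : F → ℝ) : ℝ :=
  ∑ f, ∑ g, ψ f g * p f * q g

/-- Joint expected collision penalty of a family of densities. -/
def Jc {n : ℕ} (ψ : F → F → ℝ) (p : Fin (n + 1) → F → ℝ) : ℝ :=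
  ∑ i, ∑ j ∈ Finset.univ.filter (fun j => i < j), cpen ψ (p i) (p j)

theorem Finset.sum_sum_filter_lt_comm {ι M : Type*} [Fintype ι] [LinearOrder ι]
    [AddCommMonoid M] (f : ι → ι → M) :
    ∑ i, ∑ j ∈ univ.filter (· < i), f i j = ∑ i, ∑ j ∈ univ.filter (i < ·), f j i :=
  sum_comm' fun _ _ => by simp

theorem cpen_comm {ψ : F → F → ℝ} (hψ : ∀ f g, ψ f g = ψ g f) (p q : F → ℝ) :
    cpen ψ p q = cpen ψ q p := by
  unfold cpen
  rw [sum_comm]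
  refine sum_congr rfl fun f _ => sum_congr rfl fun g _ => ?_
  rw [hψ]
  ring

theorem sum_sum_filter_lt_cpen {ι : Type*} [Fintype ι] [LinearOrder ι] {ψ : F → F → ℝ}
    (hψ : ∀ f g, ψ f g = ψ g f) (p q : ι → F → ℝ) :
    ∑ i, ∑ j ∈ univ.filter (· < i), cpen ψ (p i) (q j) =
      ∑ i, ∑ j ∈ univ.filter (i < ·), cpen ψ (q i) (p j) := by
  rw [sum_sum_filter_lt_comm]
  exact sum_congr rfl fun i _ => sum_congr rfl fun j _ => cpen_comm hψ _ _

theorem joint_penalty_sufficient_decrease_general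
    {F : Type*} [Fintype F] {n : ℕ}
    (ψ : F → F → ℝ)
    (hψ_symm : ∀ f g, ψ f g = ψ g f)
    (pk pk1 : Fin (n + 1) → F → ℝ)
    (hstep : ∀ i : Fin (n + 1),
      ((∑ j ∈ Finset.univ.filter (fun j => j < i), cpen ψ (pk1 i) (pk1 j)) +
        ∑ j ∈ Finset.univ.filter (fun j => i < j), cpen ψ (pk1 i) (pk j)) ≤
      ((∑ j ∈ Finset.univ.filter (fun j => j < i), cpen ψ (pk i) (pk1 j)) +
        ∑ j ∈ Finset.univ.filter (fun j => i < j), cpen ψ (pk i) (pk j)) -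
      ∑ f, pk1 i f * Real.log (pk1 i f / pk i f)) :
    Jc ψ pk1 ≤ Jc ψ pk - ∑ i, ∑ f, pk1 i f * Real.log (pk1 i f / pk i f) := by
  have hsum := sum_le_sum fun i (_ : i ∈ univ) => hstep i
  simp only [sum_sub_distrib, sum_add_distrib, sum_sum_filter_lt_cpen hψ_symm] at hsum
  unfold Jc
  linarith

/-- Summing the per-agent sufficient-decrease inequalities yields
    sufficient decrease of the joint expected collision penalty. -/
theorem joint_penalty_sufficient_decrease
    {F : Type*} [Fintype F] [Nonempty F] {n : ℕ}
    (ψ : F → F → ℝ) (hψ_nonneg : ∀ f g, 0 ≤ ψ f g)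
    (hψ_symm : ∀ f g, ψ f g = ψ g f)
    (pk pk1 : Fin (n + 1) → F → ℝ)
    (hpk_pos : ∀ i f, 0 < pk i f) (hpk_sum : ∀ i, ∑ f, pk i f = 1)
    (hpk1_nonneg : ∀ i f, 0 ≤ pk1 i f) (hpk1_sum : ∀ i, ∑ f, pk1 i f = 1)
    (hstep : ∀ i : Fin (n + 1),
      ((∑ j ∈ Finset.univ.filter (fun j => j < i), cpen ψ (pk1 i) (pk1 j)) +
        ∑ j ∈ Finset.univ.filter (fun j => i < j), cpen ψ (pk1 i) (pk j)) ≤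
      ((∑ j ∈ Finset.univ.filter (fun j => j < i), cpen ψ (pk i) (pk1 j)) +
        ∑ j ∈ Finset.univ.filter (fun j => i < j), cpen ψ (pk i) (pk j)) -
      ∑ f, pk1 i f * Real.log (pk1 i f / pk i f)) :
    Jc ψ pk1 ≤ Jc ψ pk - ∑ i, ∑ f, pk1 i f * Real.log (pk1 i f / pk i f) :=
  joint_penalty_sufficient_decrease_general ψ hψ_symm pk pk1 hstep
end

section
/- With the setup of the sequential iterative best response update (finite $\mathcal{F}$, symmetric nonnegative $\psi$, densities $p_i^{(k)} > 0$, each agent $i$ updating by $p_i^{(k+1)}(f) \propto p_i^{(k)}(f)\exp(-\bar\gamma_i^{(k)}(f))$ where $\bar\gamma_i^{(k)}(f) = \sum_{j<i}\sum_g \psi(f,g)p_j^{(k+1)}(g) + \sum_{j>i}\sum_g \psi(f,g)p_j^{(k)}(g)$), if $p_i^{(k+1)} \ne p_i^{(k)}$ for some $i$, then $J_c(p_0^{(k+1)},\dots,p_n^{(k+1)}) < J_c(p_0^{(k)},\dots,p_n^{(k)})$, i.e., the joint expected collision penalty strictly decreases in one full round of updates. -/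
/-
`Jc` is an exact potential for the collision game: by symmetry of `ψ`, when agent `i` alone
replaces its density `p` by `r`, `Jc` changes by `∑ f, (r f - p f) * γ f`, where `γ` is the
penalty induced by the current densities of the other agents. In the sequential round agent `i`
moves after agents `0, …, i - 1` and before the others, which is exactly the profile that `γ̄ᵢ`
reads. The Gibbs update `q ∝ p e^{-γ}` satisfies
`∑ (q - p) γ = -∑ (q - p) (log q - log p) ≤ 0`, with equality only when `q = p`, so every move
weakly decreases `Jc` and a move that changes a density decreases it strictly.
-/

open Finset

variable {F : Type*} [Fintype F]

/-- Sequentially defined interaction penalty `γ̄ᵢ` for agent `i`. -/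
def gammaBar {n : ℕ} (ψ : F → F → ℝ) (pk pk1 : Fin (n + 1) → F → ℝ)
    (i : Fin (n + 1)) (f : F) : ℝ :=
  (∑ j ∈ Finset.univ.filter (fun j => j < i), ∑ g, ψ f g * pk1 j g) +
    ∑ j ∈ Finset.univ.filter (fun j => i < j), ∑ g, ψ f g * pk j g

section PairSums

variable {ι R M : Type*} [Fintype ι] [LinearOrder ι] [CommRing R] [AddCommGroup M] [Module R M]

theorem Finset.sum_erase_eq_sum_lt_add_sum_gt {β : Type*} [AddCommMonoid β] (h : ι → β) (a : ι) :
    ∑ b ∈ Finset.univ.erase a, h b =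
      ∑ b ∈ Finset.univ.filter (· < a), h b + ∑ b ∈ Finset.univ.filter (a < ·), h b := by
  rw [← Finset.sum_filter_add_sum_filter_not (Finset.univ.erase a) (· < a)]
  congr 1 <;> congr 1 <;> ext b <;> simp only [mem_filter, mem_erase, mem_univ] <;> grind

theorem LinearMap.BilinForm.IsSymm.two_mul_sum_pairs {B : LinearMap.BilinForm R M}
    (hB : B.IsSymm) (x : ι → M) :
    2 * ∑ a, ∑ b ∈ Finset.univ.filter (a < ·), B (x a) (x b) =
      B (∑ a, x a) (∑ a, x a) - ∑ a, B (x a) (x a) := by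
  have hexpand : B (∑ a, x a) (∑ a, x a) = ∑ a, ∑ b, B (x a) (x b) := by
    simp only [map_sum, LinearMap.sum_apply]
    exact Finset.sum_comm
  have hswap : ∑ a, ∑ b ∈ Finset.univ.filter (· < a), B (x a) (x b) =
      ∑ a, ∑ b ∈ Finset.univ.filter (a < ·), B (x a) (x b) := by
    rw [Finset.sum_comm' (t' := Finset.univ) (s' := fun b => Finset.univ.filter (b < ·)) (by simp)]
    exact Finset.sum_congr rfl fun a _ => Finset.sum_congr rfl fun b _ => hB.eq _ _
  have hsplit : ∀ a, ∑ b, B (x a) (x b) = B (x a) (x a) +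
      (∑ b ∈ Finset.univ.filter (· < a), B (x a) (x b) +
        ∑ b ∈ Finset.univ.filter (a < ·), B (x a) (x b)) := fun a => by
    rw [← Finset.add_sum_erase _ _ (Finset.mem_univ a), Finset.sum_erase_eq_sum_lt_add_sum_gt]
  rw [hexpand, Finset.sum_congr rfl fun a _ => hsplit a, Finset.sum_add_distrib,
    Finset.sum_add_distrib, hswap]
  ring

theorem LinearMap.BilinForm.IsSymm.sum_pairs_update [IsDomain R] [NeZero (2 : R)]
    {B : LinearMap.BilinForm R M} (hB : B.IsSymm) (x : ι → M) (i : ι) (y : M) :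
    ∑ a, ∑ b ∈ Finset.univ.filter (a < ·), B (Function.update x i y a) (Function.update x i y b) =
      ∑ a, ∑ b ∈ Finset.univ.filter (a < ·), B (x a) (x b) +
        B (y - x i) (∑ j ∈ Finset.univ.erase i, x j) := by
  refine mul_left_cancel₀ (two_ne_zero : (2 : R) ≠ 0) ?_
  rw [mul_add, hB.two_mul_sum_pairs, hB.two_mul_sum_pairs]
  have hrest : ∀ j ∈ Finset.univ.erase i, Function.update x i y j = x j :=
    fun j hj => Function.update_of_ne (Finset.ne_of_mem_erase hj) _ _
  have hdiag : ∑ j ∈ Finset.univ.erase i, B (Function.update x i y j) (Function.update x i y j) =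
      ∑ j ∈ Finset.univ.erase i, B (x j) (x j) :=
    Finset.sum_congr rfl fun j hj => by rw [hrest j hj]
  simp only [← Finset.add_sum_erase _ _ (Finset.mem_univ i)]
  rw [Finset.sum_congr rfl hrest, hdiag, Function.update_self]
  simp only [map_add, map_sub, LinearMap.add_apply, LinearMap.sub_apply,
    hB.eq (∑ j ∈ Finset.univ.erase i, x j)]
  ring

end PairSums

theorem Real.sub_mul_log_sub_log_pos {a b : ℝ} (ha : 0 < a) (hb : 0 < b) (hab : a ≠ b) :
    0 < (a - b) * (Real.log a - Real.log b) := by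
  rcases hab.lt_or_gt with h | h
  · exact mul_pos_of_neg_of_neg (sub_neg.2 h) (sub_neg.2 (Real.log_lt_log ha h))
  · exact mul_pos (sub_pos.2 h) (sub_pos.2 (Real.log_lt_log hb h))

theorem Real.sub_mul_log_sub_log_nonneg {a b : ℝ} (ha : 0 < a) (hb : 0 < b) :
    0 ≤ (a - b) * (Real.log a - Real.log b) := by
  rcases eq_or_ne a b with rfl | hab
  · simp
  · exact (Real.sub_mul_log_sub_log_pos ha hb hab).le

noncomputable def gibbsUpdate (p γ : F → ℝ) (f : F) : ℝ :=
  p f * Real.exp (-γ f) / ∑ g, p g * Real.exp (-γ g)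

section Gibbs

variable {p : F → ℝ} (γ : F → ℝ)

theorem sum_mul_exp_neg_pos (hp : ∀ f, 0 < p f) (hps : ∑ f, p f = 1) :
    0 < ∑ g, p g * Real.exp (-γ g) :=
  Finset.sum_pos (fun g _ => mul_pos (hp g) (Real.exp_pos _))
    (Finset.nonempty_of_sum_ne_zero (hps ▸ one_ne_zero))

theorem gibbsUpdate_pos (hp : ∀ f, 0 < p f) (hps : ∑ f, p f = 1) (f : F) :
    0 < gibbsUpdate p γ f :=
  div_pos (mul_pos (hp f) (Real.exp_pos _)) (sum_mul_exp_neg_pos γ hp hps)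

theorem sum_gibbsUpdate (hp : ∀ f, 0 < p f) (hps : ∑ f, p f = 1) :
    ∑ f, gibbsUpdate p γ f = 1 := by
  simp only [gibbsUpdate]
  rw [← Finset.sum_div, div_self (sum_mul_exp_neg_pos γ hp hps).ne']

theorem log_gibbsUpdate (hp : ∀ f, 0 < p f) (hps : ∑ f, p f = 1) (f : F) :
    Real.log (gibbsUpdate p γ f) =
      Real.log (p f) - γ f - Real.log (∑ g, p g * Real.exp (-γ g)) := by
  rw [gibbsUpdate, Real.log_div (mul_pos (hp f) (Real.exp_pos _)).ne'
      (sum_mul_exp_neg_pos γ hp hps).ne', Real.log_mul (hp f).ne' (Real.exp_pos _).ne',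
    Real.log_exp, ← sub_eq_add_neg]

/-- The first variation of `∑ q γ` along the Gibbs update is minus the symmetrised
Kullback–Leibler divergence between `p` and its update. -/
theorem sum_gibbsUpdate_sub_mul (hp : ∀ f, 0 < p f) (hps : ∑ f, p f = 1) :
    ∑ f, (gibbsUpdate p γ f - p f) * γ f =
      -∑ f, (gibbsUpdate p γ f - p f) *
        (Real.log (gibbsUpdate p γ f) - Real.log (p f)) := by
  have hmass : ∑ f, (gibbsUpdate p γ f - p f) * Real.log (∑ g, p g * Real.exp (-γ g)) = 0 := by
    rw [← Finset.sum_mul, Finset.sum_sub_distrib, sum_gibbsUpdate γ hp hps, hps, sub_self,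
      zero_mul]
  rw [← add_zero (∑ f, _ * γ f), ← hmass, ← Finset.sum_add_distrib, ← Finset.sum_neg_distrib]
  refine Finset.sum_congr rfl fun f _ => ?_
  rw [log_gibbsUpdate γ hp hps]
  ring

theorem sum_gibbsUpdate_sub_mul_nonpos (hp : ∀ f, 0 < p f) (hps : ∑ f, p f = 1) :
    ∑ f, (gibbsUpdate p γ f - p f) * γ f ≤ 0 := by
  rw [sum_gibbsUpdate_sub_mul γ hp hps, neg_nonpos]
  exact Finset.sum_nonneg fun f _ =>
    Real.sub_mul_log_sub_log_nonneg (gibbsUpdate_pos γ hp hps f) (hp f)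

theorem sum_gibbsUpdate_sub_mul_neg (hp : ∀ f, 0 < p f) (hps : ∑ f, p f = 1)
    (hne : gibbsUpdate p γ ≠ p) :
    ∑ f, (gibbsUpdate p γ f - p f) * γ f < 0 := by
  rw [sum_gibbsUpdate_sub_mul γ hp hps, neg_neg_iff_pos]
  obtain ⟨f, hf⟩ := Function.ne_iff.1 hne
  exact Finset.sum_pos'
    (fun f _ => Real.sub_mul_log_sub_log_nonneg (gibbsUpdate_pos γ hp hps f) (hp f))
    ⟨f, Finset.mem_univ f, Real.sub_mul_log_sub_log_pos (gibbsUpdate_pos γ hp hps f) (hp f) hf⟩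

end Gibbs

section SwitchFirst

variable {α : Type*} {n : ℕ}

def switchFirst (p q : Fin n → α) (m : ℕ) (j : Fin n) : α :=
  if (j : ℕ) < m then q j else p j

variable (p q : Fin n → α)

@[simp]
theorem switchFirst_zero : switchFirst p q 0 = p :=
  funext fun _ => if_neg (Nat.not_lt_zero _)

@[simp]
theorem switchFirst_length : switchFirst p q n = q :=
  funext fun j => if_pos j.isLt

theorem switchFirst_of_lt {i j : Fin n} (h : j < i) : switchFirst p q i j = q j :=
  if_pos h

theorem switchFirst_of_le {i j : Fin n} (h : i ≤ j) : switchFirst p q i j = p j :=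
  if_neg h.not_gt

theorem switchFirst_succ (i : Fin n) :
    switchFirst p q (i + 1) = Function.update (switchFirst p q i) i (q i) := by
  funext j
  rcases lt_trichotomy j i with h | rfl | h
  · simp [switchFirst, h.ne, Fin.lt_def.1 h, Nat.lt_succ_of_lt (Fin.lt_def.1 h)]
  · simp [switchFirst]
  · simp [switchFirst, h.ne', h.not_ge, h.not_gt]

theorem lt_of_switchFirst_succ {β : Type*} [AddCommGroup β] [PartialOrder β]
    [IsOrderedCancelAddMonoid β] (Φ : (Fin n → α) → β)
    (hle : ∀ i : Fin n, Φ (switchFirst p q (i + 1)) ≤ Φ (switchFirst p q i))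
    (hlt : ∃ i : Fin n, Φ (switchFirst p q (i + 1)) < Φ (switchFirst p q i)) :
    Φ q < Φ p := by
  have htele : ∑ i : Fin n, (Φ (switchFirst p q (i + 1)) - Φ (switchFirst p q i)) =
      Φ q - Φ p := by
    rw [Fin.sum_univ_eq_sum_range (fun m => Φ (switchFirst p q (m + 1)) - Φ (switchFirst p q m)),
      Finset.sum_range_sub (fun m => Φ (switchFirst p q m)), switchFirst_length, switchFirst_zero]
  obtain ⟨i, hi⟩ := hlt
  rw [← sub_neg, ← htele]
  exact Finset.sum_neg' (fun i _ => sub_nonpos.2 (hle i)) ⟨i, Finset.mem_univ i, sub_neg.2 hi⟩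

end SwitchFirst

section CollisionPenalty

variable {n : ℕ} {ψ : F → F → ℝ}

theorem cpen_eq_toBilin' [DecidableEq F] (p q : F → ℝ) :
    cpen ψ p q = Matrix.toBilin' (Matrix.of ψ) p q := by
  rw [Matrix.toBilin'_apply]
  exact Finset.sum_congr rfl fun f _ => Finset.sum_congr rfl fun g _ => by
    rw [Matrix.of_apply]; ring

theorem cpen_eq_sum_mul_sum (p q : F → ℝ) : cpen ψ p q = ∑ f, p f * ∑ g, ψ f g * q g := by
  simp only [cpen, Finset.mul_sum]
  exact Finset.sum_congr rfl fun f _ => Finset.sum_congr rfl fun g _ => by ring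

theorem Jc_update (hψ : ∀ f g, ψ f g = ψ g f) (p : Fin (n + 1) → F → ℝ) (i : Fin (n + 1))
    (r : F → ℝ) :
    Jc ψ (Function.update p i r) =
      Jc ψ p + cpen ψ (r - p i) (∑ j ∈ Finset.univ.erase i, p j) := by
  classical
  have hB : (Matrix.toBilin' (Matrix.of ψ)).IsSymm :=
    Matrix.isSymm_toBilin'_iff_isSymm.2 (Matrix.IsSymm.ext fun f g => hψ g f)
  simp only [Jc, cpen_eq_toBilin']
  exact hB.sum_pairs_update p i r

theorem gammaBar_eq_sum_erase_switchFirst (p q : Fin (n + 1) → F → ℝ) (i : Fin (n + 1))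
    (f : F) :
    gammaBar ψ p q i f = ∑ g, ψ f g * (∑ j ∈ Finset.univ.erase i, switchFirst p q i j) g := by
  simp only [Finset.sum_erase_eq_sum_lt_add_sum_gt, Finset.sum_apply, mul_add,
    Finset.sum_add_distrib, Finset.mul_sum, gammaBar]
  congr 1 <;> rw [Finset.sum_comm] <;>
    refine Finset.sum_congr rfl fun g _ => Finset.sum_congr rfl fun j hj => ?_
  · rw [switchFirst_of_lt _ _ (Finset.mem_filter.1 hj).2]
  · rw [switchFirst_of_le _ _ (Finset.mem_filter.1 hj).2.le]

theorem Jc_switchFirst_succ (hψ : ∀ f g, ψ f g = ψ g f) (p q : Fin (n + 1) → F → ℝ)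
    (i : Fin (n + 1)) :
    Jc ψ (switchFirst p q (i + 1)) =
      Jc ψ (switchFirst p q i) + ∑ f, (q i f - p i f) * gammaBar ψ p q i f := by
  rw [switchFirst_succ, Jc_update hψ, switchFirst_of_le _ _ le_rfl, cpen_eq_sum_mul_sum]
  simp only [gammaBar_eq_sum_erase_switchFirst, Pi.sub_apply]

end CollisionPenalty

theorem sequential_IBR_strict_decrease_general
    {F : Type*} [Fintype F] {n : ℕ}
    (ψ : F → F → ℝ)
    (hψ_symm : ∀ f g, ψ f g = ψ g f)
    (pk pk1 : Fin (n + 1) → F → ℝ)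
    (hpk_pos : ∀ i f, 0 < pk i f) (hpk_sum : ∀ i, ∑ f, pk i f = 1)
    (hupdate : ∀ i f, pk1 i f =
      pk i f * Real.exp (-(gammaBar ψ pk pk1 i f)) /
        ∑ g, pk i g * Real.exp (-(gammaBar ψ pk pk1 i g)))
    (hchange : ∃ i, pk1 i ≠ pk i) :
    Jc ψ pk1 < Jc ψ pk := by
  have hgibbs : ∀ i, pk1 i = gibbsUpdate (pk i) (gammaBar ψ pk pk1 i) :=
    fun i => funext (hupdate i)
  have hstep : ∀ i : Fin (n + 1),
      Jc ψ (switchFirst pk pk1 (i + 1)) - Jc ψ (switchFirst pk pk1 i) =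
        ∑ f, (gibbsUpdate (pk i) (gammaBar ψ pk pk1 i) f - pk i f) * gammaBar ψ pk pk1 i f :=
    fun i => by rw [Jc_switchFirst_succ hψ_symm, ← hgibbs i, add_sub_cancel_left]
  obtain ⟨i₀, hi₀⟩ := hchange
  refine lt_of_switchFirst_succ pk pk1 (Jc ψ) (fun i => sub_nonpos.1 ?_) ⟨i₀, sub_neg.1 ?_⟩
  · exact (hstep i).trans_le (sum_gibbsUpdate_sub_mul_nonpos _ (hpk_pos i) (hpk_sum i))
  · exact (hstep i₀).trans_lt
      (sum_gibbsUpdate_sub_mul_neg _ (hpk_pos i₀) (hpk_sum i₀) (hgibbs i₀ ▸ hi₀))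

/-- One full round of the sequential iterative best response update
    strictly decreases the joint expected collision penalty, provided some agent's
    preference actually changed. -/
theorem sequential_IBR_strict_decrease
    {F : Type*} [Fintype F] [Nonempty F] {n : ℕ}
    (ψ : F → F → ℝ) (hψ_nonneg : ∀ f g, 0 ≤ ψ f g)
    (hψ_symm : ∀ f g, ψ f g = ψ g f)
    (pk pk1 : Fin (n + 1) → F → ℝ)
    (hpk_pos : ∀ i f, 0 < pk i f) (hpk_sum : ∀ i, ∑ f, pk i f = 1)
    (hupdate : ∀ i f, pk1 i f =
      pk i f * Real.exp (-(gammaBar ψ pk pk1 i f)) /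
        ∑ g, pk i g * Real.exp (-(gammaBar ψ pk pk1 i g)))
    (hchange : ∃ i, pk1 i ≠ pk i) :
    Jc ψ pk1 < Jc ψ pk :=
  sequential_IBR_strict_decrease_general ψ hψ_symm pk pk1 hpk_pos hpk_sum hupdate hchange
end
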